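/- The CDF of the Rician power distribution admits the power series expansion F_X(γ) = Σ_{q≥0} (-1)^q e^{-K} (L_q(K)/(1+q)!) ((1+K)γ/Ω)^{q+1} for all γ ≥ 0, where L_q is the q-th Laguerre polynomial; equivalently 1 - Q_1(√(2K), √(2(K+1)γ/Ω)) equals this series, with Q_1 the first-order Marcum Q-function. -/

import Mathlib

open MeasureTheory ProbabilityTheory Real Filter Finset

/-- Modified Bessel function of the first kind, order zero. -/
noncomputable def besselI0 (z : ℝ) : ℝ :=
  ∑' m : ℕ, (z / 2) ^ (2 * m) / ((Nat.factorial m : ℝ)) ^ 2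

/-- Density of the Rician power (scaled noncentral chi-squared) distribution with
Rician factor `K` and average power `Om`. -/
noncomputable def ricianPdf (K Om x : ℝ) : ℝ :=
  if 0 ≤ x then ((K + 1) / Om) * Real.exp (-K - (K + 1) * x / Om) *
    besselI0 (2 * Real.sqrt (K * (K + 1) * x / Om)) else 0

/-- Laguerre polynomial of degree `n` (order zero). -/
noncomputable def laguerreP (n : ℕ) (x : ℝ) : ℝ :=
  ∑ k ∈ Finset.range (n + 1), (-1 : ℝ) ^ k * (n.choose k : ℝ) * x ^ k / (Nat.factorial k : ℝ)

/-- The coefficient `α(q, Ω, K, γ)` in the Rician power CDF expansion. -/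
noncomputable def alphaCoef (q : ℕ) (Om K γ : ℝ) : ℝ :=
  (-1 : ℝ) ^ q * Real.exp (-K) * (laguerreP q K / (Nat.factorial (q + 1) : ℝ)) *
    ((1 + K) * γ / Om) ^ (q + 1)

/-- First-order Marcum Q-function. -/
noncomputable def marcumQ1 (a b : ℝ) : ℝ :=
  ∫ t in Set.Ioi b, t * Real.exp (-(t ^ 2 + a ^ 2) / 2) * besselI0 (a * t)

/-- The confluent hypergeometric value `₁F₁(-l, 1; -K)` for nonnegative integer `l`. -/
noncomputable def hyp1F1 (l : ℕ) (K : ℝ) : ℝ :=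
  ∑ j ∈ Finset.range (l + 1), (l.choose j : ℝ) * K ^ j / (Nat.factorial j : ℝ)


lemma summable_sq (u : ℝ) : Summable (fun m : ℕ => u ^ m / (m.factorial : ℝ) ^ 2) := by
  refine Summable.of_norm ?_
  refine (Real.summable_pow_div_factorial |u|).of_nonneg_of_le (fun m => norm_nonneg _) (fun m => ?_)
  have h1 : (1:ℝ) ≤ (m.factorial : ℝ) := by exact_mod_cast Nat.one_le_iff_ne_zero.2 m.factorial_ne_zero
  rw [norm_div, norm_pow, Real.norm_eq_abs, Real.norm_eq_abs, abs_of_nonneg (by positivity : (0:ℝ) ≤ (m.factorial:ℝ)^2)]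
  apply div_le_div_of_nonneg_left (by positivity) (by positivity)
  nlinarith

lemma besselI0_eq (z : ℝ) : besselI0 z = ∑' m : ℕ, ((z/2)^2) ^ m / (m.factorial : ℝ) ^ 2 := by
  unfold besselI0
  exact tsum_congr fun m => by rw [pow_mul]

lemma besselI0_sqrt {u : ℝ} (hu : 0 ≤ u) :
    besselI0 (2 * Real.sqrt u) = ∑' m : ℕ, u ^ m / (m.factorial : ℝ) ^ 2 := by
  rw [besselI0_eq]
  refine tsum_congr fun m => ?_
  have : (2 * Real.sqrt u / 2) = Real.sqrt u := by ring
  rw [this, Real.sq_sqrt hu]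

lemma besselI0_nonneg (z : ℝ) : 0 ≤ besselI0 z := by
  rw [besselI0_eq]
  exact tsum_nonneg fun m => by positivity

lemma measurable_besselI0 : Measurable besselI0 := by
  have key : besselI0 = fun z => (∑' m : ℕ, ENNReal.ofReal (((z/2)^2) ^ m / (m.factorial : ℝ) ^ 2)).toReal := by
    funext z
    rw [besselI0_eq, ← ENNReal.ofReal_tsum_of_nonneg (fun m => by positivity) (summable_sq _),
      ENNReal.toReal_ofReal (tsum_nonneg fun m => by positivity)]
  rw [key]
  refine Measurable.ennreal_toReal (Measurable.ennreal_tsum fun m => ?_)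
  exact ENNReal.measurable_ofReal.comp ((by fun_prop : Measurable fun z : ℝ => ((z/2)^2)^m / (m.factorial:ℝ)^2))

lemma measurable_ricianPdf (K Om : ℝ) : Measurable (ricianPdf K Om) := by
  unfold ricianPdf
  have h0 : MeasurableSet {x : ℝ | 0 ≤ x} := measurableSet_Ici
  refine Measurable.ite h0 ?_ measurable_const
  have h1 : Measurable fun x : ℝ => ((K + 1) / Om) * Real.exp (-K - (K + 1) * x / Om) := by fun_prop
  refine h1.mul (measurable_besselI0.comp ?_)
  fun_prop

lemma ricianPdf_nonneg {K Om : ℝ} (hK : 0 ≤ K) (hOm : 0 < Om) (x : ℝ) : 0 ≤ ricianPdf K Om x := by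
  unfold ricianPdf
  split
  · have := besselI0_nonneg (2 * Real.sqrt (K * (K + 1) * x / Om))
    positivity
  · exact le_rfl

noncomputable def Tfun (K c γ : ℝ) (p : ℕ × ℕ) : ℝ :=
  Real.exp (-K) * (K ^ p.1 / ((p.1.factorial : ℝ)) ^ 2) * ((-1 : ℝ) ^ p.2 / (p.2.factorial : ℝ)) *
    (c * γ) ^ (p.1 + p.2 + 1) / (p.1 + p.2 + 1 : ℕ)

lemma T_summable {K c γ : ℝ} (hK : 0 ≤ K) (hc : 0 < c) (hγ : 0 ≤ γ) :
    Summable (Tfun K c γ) := by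
  set a := c * γ with ha
  have ha0 : 0 ≤ a := by positivity
  have hf : Summable (fun m : ℕ => Real.exp (-K) * a * ((K * a) ^ m / (m.factorial : ℝ) ^ 2)) :=
    (summable_sq (K * a)).mul_left _
  have hg : Summable (fun n : ℕ => a ^ n / (n.factorial : ℝ)) := Real.summable_pow_div_factorial a
  refine Summable.of_norm ?_
  refine Summable.of_nonneg_of_le (fun p => norm_nonneg _) (fun p => ?_)
    (hf.mul_of_nonneg hg (fun m => by positivity) (fun n => by positivity))
  obtain ⟨m, n⟩ := p
  simp only [Tfun, Function.comp]
  have h1 : (0:ℝ) < (m + n + 1 : ℕ) := by positivity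
  have hfac : (1:ℝ) ≤ (m + n + 1 : ℕ) := by exact_mod_cast Nat.one_le_iff_ne_zero.2 (by omega)
  calc ‖Real.exp (-K) * (K ^ m / ((m.factorial : ℝ)) ^ 2) * ((-1 : ℝ) ^ n / (n.factorial : ℝ)) *
        a ^ (m + n + 1) / (m + n + 1 : ℕ)‖
      = Real.exp (-K) * (K ^ m / ((m.factorial : ℝ)) ^ 2) * (1 / (n.factorial : ℝ)) *
        a ^ (m + n + 1) / (m + n + 1 : ℕ) := by
        have hre : Real.exp (-K) * (K ^ m / ((m.factorial : ℝ)) ^ 2) * ((-1 : ℝ) ^ n / (n.factorial : ℝ)) *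
            a ^ (m + n + 1) / (m + n + 1 : ℕ) = ((-1:ℝ)^n) * (Real.exp (-K) * (K ^ m / ((m.factorial : ℝ)) ^ 2) *
            (1 / (n.factorial : ℝ)) * a ^ (m + n + 1) / (m + n + 1 : ℕ)) := by ring
        rw [hre, norm_mul, norm_pow, norm_neg, norm_one, one_pow, one_mul, Real.norm_eq_abs]
        exact abs_of_nonneg (div_nonneg (mul_nonneg (mul_nonneg (mul_nonneg (Real.exp_pos _).le
          (div_nonneg (pow_nonneg hK m) (by positivity))) (by positivity)) (pow_nonneg ha0 _)) h1.le)
    _ ≤ Real.exp (-K) * (K ^ m / ((m.factorial : ℝ)) ^ 2) * (1 / (n.factorial : ℝ)) *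
        a ^ (m + n + 1) := by
        rw [div_le_iff₀ h1]
        nlinarith [mul_nonneg (mul_nonneg (mul_nonneg (Real.exp_pos (-K)).le
          (by positivity : (0:ℝ) ≤ K ^ m / (m.factorial:ℝ)^2)) (by positivity : (0:ℝ) ≤ 1/(n.factorial:ℝ)))
          (by positivity : (0:ℝ) ≤ a ^ (m+n+1))]
    _ = Real.exp (-K) * a * ((K * a) ^ m / (m.factorial : ℝ) ^ 2) * (a ^ n / (n.factorial : ℝ)) := by
        rw [pow_add, pow_add, pow_one, mul_pow]
        ring

lemma sum_antidiag_eq (K c γ : ℝ) (hK : 0 ≤ K) (q : ℕ) :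
    ∑ p ∈ Finset.HasAntidiagonal.antidiagonal q, Tfun K c γ p
      = (-1:ℝ)^q * Real.exp (-K) * (laguerreP q K / ((q+1).factorial : ℝ)) * (c*γ)^(q+1) := by
  rw [Finset.Nat.sum_antidiagonal_eq_sum_range_succ (fun m n => Tfun K c γ (m, n)) q]
  rw [laguerreP, Finset.sum_div, Finset.mul_sum, Finset.sum_mul]
  refine Finset.sum_congr rfl fun k hk => ?_
  have hkq : k ≤ q := Nat.lt_succ_iff.mp (Finset.mem_range.mp hk)
  have hadd : k + (q - k) = q := Nat.add_sub_cancel' hkq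
  simp only [Tfun, hadd]
  have h3 : (-1:ℝ)^(q-k) = (-1)^q * (-1)^k := by
    rw [← pow_add, show q + k = (q - k) + 2*k by omega, pow_add, pow_mul, neg_one_sq, one_pow,
      mul_one]
  have h1 : ((q+1).factorial : ℝ) = (q+1) * (q.factorial) := by
    exact_mod_cast Nat.factorial_succ q
  have h2 : ((q.choose k : ℕ) : ℝ) * (k.factorial) * ((q-k).factorial) = q.factorial := by
    exact_mod_cast Nat.choose_mul_factorial_mul_factorial hkq
  have hkf : ((k.factorial : ℕ) : ℝ) ≠ 0 := by positivity
  have hqkf : (((q-k).factorial : ℕ) : ℝ) ≠ 0 := by positivity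
  have hqf : ((q.factorial : ℕ) : ℝ) ≠ 0 := by positivity
  have hq1 : ((q+1 : ℕ) : ℝ) ≠ 0 := by positivity
  rw [h3]
  have hco : (1:ℝ)/((k.factorial:ℝ)^2 * ((q-k).factorial:ℝ) * ((q:ℝ)+1))
      = (q.choose k:ℝ)/((k.factorial:ℝ) * ((q+1).factorial:ℝ)) := by
    rw [div_eq_div_iff (by positivity) (by positivity)]
    push_cast [Nat.factorial_succ]
    linear_combination (-((k.factorial:ℝ) * ((q:ℝ)+1))) * h2
  push_cast
  field_simp
  rw [h1]
  linear_combination (-(K^k * (c*γ)^(q+1) * ((q:ℝ)+1))) * h2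

set_option maxHeartbeats 1000000 in
lemma tsum_antidiag (K c γ : ℝ) (hsum : Summable (Tfun K c γ)) :
    Summable (fun q : ℕ => ∑ p ∈ Finset.HasAntidiagonal.antidiagonal q, Tfun K c γ p) ∧
    ∑' p : ℕ × ℕ, Tfun K c γ p = ∑' q : ℕ, ∑ p ∈ Finset.HasAntidiagonal.antidiagonal q, Tfun K c γ p := by
  have hσ : Summable (fun x : Σ n : ℕ, Finset.HasAntidiagonal.antidiagonal n =>
      Tfun K c γ (Finset.HasAntidiagonal.sigmaAntidiagonalEquivProd x)) :=
    (Equiv.summable_iff _).2 hsum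
  have hfin : ∀ q : ℕ, ∑' (c' : (Finset.HasAntidiagonal.antidiagonal q : Finset (ℕ × ℕ))), Tfun K c γ ↑c'
      = ∑ p ∈ Finset.HasAntidiagonal.antidiagonal q, Tfun K c γ p := by
    intro q
    rw [tsum_fintype]
    exact Finset.sum_coe_sort _ _
  constructor
  · have h := hσ.sigma' (fun n => (hasSum_fintype _).summable)
    refine h.congr fun q => ?_
    exact hfin q
  · rw [← Finset.HasAntidiagonal.sigmaAntidiagonalEquivProd.tsum_eq (Tfun K c γ),
      Summable.tsum_sigma' (fun n => (hasSum_fintype _).summable) hσ]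
    exact tsum_congr hfin

lemma setint_norm_le {γ C : ℝ} (hγ : 0 ≤ γ) (f : ℝ → ℝ)
    (hC : ∀ x ∈ Set.Icc (0:ℝ) γ, ‖f x‖ ≤ C) :
    ∫ x in Set.Icc (0:ℝ) γ, ‖f x‖ ≤ C * γ := by
  have hvol : volume (Set.Icc (0:ℝ) γ) < ⊤ := by
    rw [Real.volume_Icc]; exact ENNReal.ofReal_lt_top
  have h := norm_setIntegral_le_of_norm_le_const (μ := volume) hvol
    (f := fun x => ‖f x‖) (C := C) (fun x hx => by rw [norm_norm]; exact hC x hx)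
  rw [measureReal_def, Real.volume_Icc, ENNReal.toReal_ofReal (by linarith)] at h
  calc ∫ x in Set.Icc (0:ℝ) γ, ‖f x‖ ≤ ‖∫ x in Set.Icc (0:ℝ) γ, ‖f x‖‖ := le_abs_self _
  _ ≤ C * (γ - 0) := h
  _ = C * γ := by ring

lemma integral_monomial {γ : ℝ} (hγ : 0 ≤ γ) (k : ℕ) :
    ∫ x in Set.Icc (0:ℝ) γ, x ^ k = γ ^ (k+1) / ((k+1 : ℕ) : ℝ) := by
  rw [integral_Icc_eq_integral_Ioc, ← intervalIntegral.integral_of_le hγ, integral_pow]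
  push_cast
  rw [zero_pow (by omega)]
  ring

lemma inner_integral {c γ : ℝ} (hc : 0 < c) (hγ : 0 ≤ γ) (m : ℕ) :
    ∫ x in Set.Icc (0:ℝ) γ, x ^ m * Real.exp (-(c*x))
      = ∑' n : ℕ, ((-c)^n / (n.factorial : ℝ)) * (γ^(m+n+1) / ((m+n+1 : ℕ) : ℝ)) := by
  have hpt : ∀ x : ℝ, x ^ m * Real.exp (-(c*x))
      = ∑' n : ℕ, ((-c)^n / (n.factorial : ℝ)) * x ^ (m+n) := by
    intro x
    rw [Real.exp_eq_exp_ℝ, NormedSpace.exp_eq_tsum_div]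
    rw [← tsum_mul_left]
    refine tsum_congr fun n => ?_
    rw [neg_pow (c*x) n, mul_pow, pow_add]
    field_simp
    ring
  simp_rw [hpt]
  rw [← MeasureTheory.integral_tsum_of_summable_integral_norm]
  · refine tsum_congr fun n => ?_
    rw [integral_const_mul, integral_monomial hγ (m+n)]
  · intro n
    exact (Continuous.integrableOn_Icc (by fun_prop))
  · refine Summable.of_nonneg_of_le
      (fun n => integral_nonneg fun x => norm_nonneg _) (fun n => ?_)
      (((Real.summable_pow_div_factorial (c*γ)).mul_left (γ^m)).mul_right γ)
    refine setint_norm_le hγ _ (fun x hx => ?_)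
    obtain ⟨hx0, hxγ⟩ := hx
    have hrw : γ^m * ((c*γ)^n / (n.factorial : ℝ)) = c^n / (n.factorial : ℝ) * γ^(m+n) := by
      rw [mul_pow, pow_add]; ring
    rw [hrw, norm_mul, norm_div, norm_pow, norm_pow, norm_neg, Real.norm_eq_abs c,
      Real.norm_eq_abs x, Real.norm_eq_abs ((n.factorial : ℝ)), abs_of_pos hc,
      abs_of_nonneg hx0, abs_of_nonneg (by positivity : (0:ℝ) ≤ (n.factorial:ℝ))]
    gcongr

lemma outer_integral {K c γ : ℝ} (hK : 0 ≤ K) (hc : 0 < c) (hγ : 0 ≤ γ) :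
    ∫ x in Set.Icc (0:ℝ) γ, c * Real.exp (-K - c*x) * besselI0 (2 * Real.sqrt (K*(c*x)))
      = ∑' p : ℕ × ℕ, Tfun K c γ p := by
  have hpt : ∀ x ∈ Set.Icc (0:ℝ) γ, c * Real.exp (-K - c*x) * besselI0 (2 * Real.sqrt (K*(c*x)))
      = ∑' m : ℕ, (c * Real.exp (-K) * ((K*c)^m / ((m.factorial:ℝ))^2)) * (x^m * Real.exp (-(c*x))) := by
    intro x hx
    have hu : 0 ≤ K*(c*x) := mul_nonneg hK (mul_nonneg hc.le hx.1)
    rw [besselI0_sqrt hu, ← tsum_mul_left]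
    refine tsum_congr fun m => ?_
    rw [show -K - c*x = -K + -(c*x) by ring, Real.exp_add, mul_pow K (c*x), mul_pow c x]
    field_simp
    ring
  rw [setIntegral_congr_fun measurableSet_Icc hpt]
  rw [← MeasureTheory.integral_tsum_of_summable_integral_norm]
  · rw [Summable.tsum_prod' (T_summable hK hc hγ) (fun m => (T_summable hK hc hγ).prod_factor m)]
    refine tsum_congr fun m => ?_
    rw [integral_const_mul, inner_integral hc hγ m, ← tsum_mul_left]
    refine tsum_congr fun n => ?_
    simp only [Tfun]
    rw [mul_pow K c, neg_pow, mul_pow c γ, pow_add c (m+n) 1, pow_add c m n, pow_one]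
    ring
  · intro m
    exact (Continuous.integrableOn_Icc (by fun_prop))
  · refine Summable.of_nonneg_of_le
      (fun m => integral_nonneg fun x => norm_nonneg _) (fun m => ?_)
      (((summable_sq (K*(c*γ))).mul_left (c * Real.exp (-K))).mul_right γ)
    refine setint_norm_le hγ _ (fun x hx => ?_)
    obtain ⟨hx0, hxγ⟩ := hx
    have he1 : Real.exp (-(c*x)) ≤ 1 := Real.exp_le_one_iff.mpr (by nlinarith)
    have hrw : c * Real.exp (-K) * ((K*(c*γ))^m / ((m.factorial:ℝ))^2)
        = (c * Real.exp (-K) * ((K*c)^m / ((m.factorial:ℝ))^2)) * γ^m := by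
      rw [mul_pow K (c*γ), mul_pow c γ, mul_pow K c]
      ring
    have hbase : (0:ℝ) ≤ c * Real.exp (-K) * ((K*c)^m / ((m.factorial:ℝ))^2) := by
      have : (0:ℝ) ≤ (K*c)^m := pow_nonneg (mul_nonneg hK hc.le) m
      positivity
    rw [hrw, Real.norm_eq_abs, abs_of_nonneg (mul_nonneg hbase
      (mul_nonneg (pow_nonneg hx0 m) (Real.exp_pos _).le))]
    calc c * Real.exp (-K) * ((K*c)^m / ((m.factorial:ℝ))^2) * (x^m * Real.exp (-(c*x)))
        ≤ c * Real.exp (-K) * ((K*c)^m / ((m.factorial:ℝ))^2) * (γ^m * 1) := by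
          gcongr
      _ = c * Real.exp (-K) * ((K*c)^m / ((m.factorial:ℝ))^2) * γ^m := by ring

lemma sqrt_four : Real.sqrt 4 = 2 := by
  rw [show (4:ℝ) = 2^2 by norm_num, Real.sqrt_sq (by norm_num : (0:ℝ) ≤ 2)]

lemma marcum_eq {K c γ : ℝ} (hK : 0 ≤ K) (hc : 0 < c) (hγ : 0 ≤ γ) :
    marcumQ1 (Real.sqrt (2*K)) (Real.sqrt (2*c*γ))
      = ∫ x in Set.Ioi γ, c * Real.exp (-K - c*x) * besselI0 (2 * Real.sqrt (K*(c*x))) := by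
  have himg : (fun x : ℝ => Real.sqrt (2*c*x)) '' Set.Ioi γ = Set.Ioi (Real.sqrt (2*c*γ)) := by
    ext t
    constructor
    · rintro ⟨x, hx, rfl⟩
      have hx' : γ < x := hx
      exact Real.sqrt_lt_sqrt (by positivity) (by nlinarith)
    · intro ht
      have ht' : Real.sqrt (2*c*γ) < t := ht
      have ht0 : 0 ≤ t := le_trans (Real.sqrt_nonneg _) ht'.le
      have htsq : 2*c*γ < t^2 := by
        have h0 : Real.sqrt (2*c*γ) ^ 2 < t^2 := by
          nlinarith [Real.sqrt_nonneg (2*c*γ)]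
        rwa [Real.sq_sqrt (by positivity : (0:ℝ) ≤ 2*c*γ)] at h0
      refine ⟨t^2/(2*c), ?_, ?_⟩
      · show γ < t^2/(2*c)
        rw [lt_div_iff₀ (by positivity)]
        nlinarith
      · show Real.sqrt (2*c*(t^2/(2*c))) = t
        rw [show 2*c*(t^2/(2*c)) = t^2 by field_simp, Real.sqrt_sq ht0]
  have hderiv : ∀ x ∈ Set.Ioi γ, HasDerivWithinAt (fun x : ℝ => Real.sqrt (2*c*x))
      (c / Real.sqrt (2*c*x)) (Set.Ioi γ) x := by
    intro x hx
    have hx0 : 0 < x := lt_of_le_of_lt hγ hx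
    have h2cx : (0:ℝ) < 2*c*x := by positivity
    have h := (Real.hasDerivAt_sqrt h2cx.ne').comp x ((hasDerivAt_id x).const_mul (2*c))
    have heq : 1 / (2 * Real.sqrt (2*c*x)) * (2*c*1) = c / Real.sqrt (2*c*x) := by
      have hs : Real.sqrt (2*c*x) ≠ 0 := (Real.sqrt_pos.mpr h2cx).ne'
      field_simp
    rw [heq] at h
    exact h.hasDerivWithinAt
  have hinj : Set.InjOn (fun x : ℝ => Real.sqrt (2*c*x)) (Set.Ioi γ) := by
    intro a ha b hb hab
    have ha' : 0 < a := lt_of_le_of_lt hγ ha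
    have hb' : 0 < b := lt_of_le_of_lt hγ hb
    have ha0 : 0 ≤ 2*c*a := by positivity
    have hb0 : 0 ≤ 2*c*b := by positivity
    have : 2*c*a = 2*c*b := by
      have h1 := Real.sq_sqrt ha0
      have h2 := Real.sq_sqrt hb0
      simp only at hab
      rw [hab] at h1
      rw [h2] at h1
      linarith
    have hc2 : (2*c) ≠ 0 := by positivity
    exact mul_left_cancel₀ hc2 this
  rw [marcumQ1, ← himg,
    MeasureTheory.integral_image_eq_integral_abs_deriv_smul measurableSet_Ioi hderiv hinj]
  refine setIntegral_congr_fun measurableSet_Ioi (fun x hx => ?_)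
  have hx0 : 0 < x := lt_of_le_of_lt hγ hx
  have h2cx : (0:ℝ) < 2*c*x := by positivity
  have hs : (0:ℝ) < Real.sqrt (2*c*x) := Real.sqrt_pos.mpr h2cx
  have e1 : Real.sqrt (2*c*x) ^ 2 = 2*c*x := Real.sq_sqrt h2cx.le
  have e2 : Real.sqrt (2*K) ^ 2 = 2*K := Real.sq_sqrt (by positivity)
  have e3 : Real.sqrt (2*K) * Real.sqrt (2*c*x) = 2 * Real.sqrt (K*(c*x)) := by
    rw [← Real.sqrt_mul (by positivity) (2*c*x), show 2*K*(2*c*x) = 4*(K*(c*x)) by ring,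
      Real.sqrt_mul (by norm_num : (0:ℝ) ≤ 4), sqrt_four]
  simp only [smul_eq_mul]
  rw [e1, e2, e3, abs_of_pos (div_pos hc hs),
    show -(2*c*x + 2*K)/2 = -K - c*x by ring]
  field_simp

/-- The CDF of the Rician power distribution admits the convergent expansion
`F_X(γ) = Σ_{q≥0} α(q, Ω, K, γ)` for all `γ ≥ 0`, and equivalently
`1 - Q₁(√(2K), √(2(K+1)γ/Ω))` equals this series. -/
theorem stmt4 {α : Type*} [MeasurableSpace α] (μ : Measure α) [IsProbabilityMeasure μ]
    (X : α → ℝ) (hXm : Measurable X) (K Om : ℝ) (hK : 0 ≤ K) (hOm : 0 < Om)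
    (hlaw : Measure.map X μ = volume.withDensity fun x => ENNReal.ofReal (ricianPdf K Om x))
    (γ : ℝ) (hγ : 0 ≤ γ) :
    Summable (fun q : ℕ => alphaCoef q Om K γ) ∧
    (μ {ω | X ω ≤ γ}).toReal = ∑' q : ℕ, alphaCoef q Om K γ ∧
    1 - marcumQ1 (Real.sqrt (2 * K)) (Real.sqrt (2 * (K + 1) * γ / Om)) =
      ∑' q : ℕ, alphaCoef q Om K γ := by
  have hc : 0 < (K+1)/Om := div_pos (by linarith) hOm
  have hnonneg := ricianPdf_nonneg hK hOm
  have hmeas := measurable_ricianPdf K Om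
  have hpdf : ∀ x : ℝ, 0 ≤ x → ricianPdf K Om x
      = ((K+1)/Om) * Real.exp (-K - ((K+1)/Om)*x) * besselI0 (2*Real.sqrt (K*(((K+1)/Om)*x))) := by
    intro x hx
    rw [ricianPdf, if_pos hx,
      show -K - (K + 1) * x / Om = -K - ((K+1)/Om)*x by ring,
      show K * (K + 1) * x / Om = K*(((K+1)/Om)*x) by ring]
  have hmap : ∀ s : Set ℝ, MeasurableSet s →
      μ (X ⁻¹' s) = ∫⁻ x in s, ENNReal.ofReal (ricianPdf K Om x) := by
    intro s hs
    rw [← Measure.map_apply hXm hs, hlaw, withDensity_apply _ hs]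
  have huniv : ∫⁻ x, ENNReal.ofReal (ricianPdf K Om x) = 1 := by
    rw [← setLIntegral_univ, ← hmap _ MeasurableSet.univ, Set.preimage_univ, measure_univ]
  have hintg : Integrable (ricianPdf K Om) := by
    refine ⟨hmeas.aestronglyMeasurable, ?_⟩
    rw [hasFiniteIntegral_iff_ofReal (ae_of_all _ hnonneg), huniv]
    exact ENNReal.one_lt_top
  have hIic : (μ {ω | X ω ≤ γ}).toReal = ∫ x in Set.Iic γ, ricianPdf K Om x := by
    have h1 : {ω | X ω ≤ γ} = X ⁻¹' (Set.Iic γ) := rfl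
    rw [h1, hmap _ measurableSet_Iic,
      MeasureTheory.integral_eq_lintegral_of_nonneg_ae (ae_of_all _ fun x => hnonneg x)
        hmeas.aestronglyMeasurable]
  have htotal : ∫ x, ricianPdf K Om x = 1 := by
    rw [MeasureTheory.integral_eq_lintegral_of_nonneg_ae (ae_of_all _ hnonneg)
      hmeas.aestronglyMeasurable, huniv, ENNReal.toReal_one]
  have hsplit0 : ∫ x in Set.Iic γ, ricianPdf K Om x = ∫ x in Set.Icc 0 γ, ricianPdf K Om x := by
    have hset : Set.Iic γ = Set.Iio 0 ∪ Set.Icc 0 γ := by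
      ext x
      simp only [Set.mem_Iic, Set.mem_union, Set.mem_Iio, Set.mem_Icc]
      constructor
      · intro h
        rcases lt_or_ge x 0 with h'|h'
        · exact Or.inl h'
        · exact Or.inr ⟨h', h⟩
      · rintro (h|⟨_,h⟩) <;> linarith
    have hdisj : Disjoint (Set.Iio (0:ℝ)) (Set.Icc 0 γ) :=
      Set.disjoint_left.mpr fun x hx hx' => absurd hx'.1 (not_le.2 hx)
    rw [hset, setIntegral_union hdisj measurableSet_Icc hintg.integrableOn hintg.integrableOn]
    have hz : ∫ x in Set.Iio (0:ℝ), ricianPdf K Om x = 0 := by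
      rw [setIntegral_congr_fun measurableSet_Iio
        (fun x hx => by rw [ricianPdf, if_neg (not_le.2 hx)] : ∀ x ∈ Set.Iio (0:ℝ),
          ricianPdf K Om x = (0:ℝ))]
      exact integral_zero _ _
    rw [hz, zero_add]
  have hIccT : ∫ x in Set.Icc 0 γ, ricianPdf K Om x = ∑' p : ℕ×ℕ, Tfun K ((K+1)/Om) γ p := by
    rw [setIntegral_congr_fun measurableSet_Icc (fun x hx => hpdf x hx.1)]
    exact outer_integral hK hc hγ
  have hT := tsum_antidiag K ((K+1)/Om) γ (T_summable hK hc hγ)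
  have halpha : ∀ q, (∑ p ∈ Finset.HasAntidiagonal.antidiagonal q, Tfun K ((K+1)/Om) γ p)
      = alphaCoef q Om K γ := by
    intro q
    rw [sum_antidiag_eq K _ γ hK q, alphaCoef, show ((K+1)/Om)*γ = (1+K)*γ/Om by ring]
  have hsummable : Summable (fun q => alphaCoef q Om K γ) := hT.1.congr halpha
  have hseries : ∫ x in Set.Iic γ, ricianPdf K Om x = ∑' q, alphaCoef q Om K γ :=
    hsplit0.trans (hIccT.trans (hT.2.trans (tsum_congr halpha)))
  refine ⟨hsummable, hIic.trans hseries, ?_⟩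
  have hb : Real.sqrt (2*(K+1)*γ/Om) = Real.sqrt (2*((K+1)/Om)*γ) := by
    rw [show 2*(K+1)*γ/Om = 2*((K+1)/Om)*γ by ring]
  have hM : marcumQ1 (Real.sqrt (2*K)) (Real.sqrt (2*(K+1)*γ/Om))
      = ∫ x in Set.Ioi γ, ricianPdf K Om x := by
    rw [hb, marcum_eq hK hc hγ]
    exact setIntegral_congr_fun measurableSet_Ioi
      (fun x hx => (hpdf x (le_of_lt (lt_of_le_of_lt hγ hx))).symm)
  have hcompl : (∫ x in Set.Iic γ, ricianPdf K Om x) + ∫ x in Set.Ioi γ, ricianPdf K Om x = 1 := by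
    have h := integral_add_compl (measurableSet_Iic : MeasurableSet (Set.Iic γ)) hintg
    rw [Set.compl_Iic] at h
    rw [h, htotal]
  rw [hM]
  linarith [hseries, hcompl]
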